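/- arXiv:2403.08106 — 7 statements merged into one kernel-verified Lean document; each statement's English description precedes it below -/
import Mathlib

section
/- Let c ≥ 1 be a natural number, let z ∈ ℝ^c, let α ∈ ℝ, and let ξ ∈ ℝ^c with ξ_k > 0 for every k. Then ln(∑_{k=1}^{c} exp(z_k)) ≤ α + ∑_{k=1}^{c} [ (z_k − α − ξ_k)/2 + λ(ξ_k)·((z_k − α)² − ξ_k²) + ln(1 + exp(ξ_k)) ]. -/
noncomputable def sigmoid (x : ℝ) : ℝ := 1 / (1 + Real.exp (-x))

noncomputable def lam (ξ : ℝ) : ℝ := (sigmoid ξ - 1 / 2) / (2 * ξ)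

open Real Set

private lemma phi_anti : StrictAntiOn (fun u : ℝ => Real.sinh u / (u * Real.cosh u)) (Ioi 0) := by
  apply strictAntiOn_of_deriv_neg (convex_Ioi 0)
  · exact Real.continuous_sinh.continuousOn.div
      ((continuous_id.mul Real.continuous_cosh).continuousOn)
      (fun x hx => (mul_pos hx (Real.cosh_pos x)).ne')
  · intro x hx
    rw [interior_Ioi] at hx
    have hx0 : (0:ℝ) < x := hx
    have hd : HasDerivAt (fun u : ℝ => Real.sinh u / (u * Real.cosh u))
        ((Real.cosh x * (x * Real.cosh x) -
          Real.sinh x * (1 * Real.cosh x + x * Real.sinh x)) / (x * Real.cosh x) ^ 2) x := by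
      exact (Real.hasDerivAt_sinh x).div ((hasDerivAt_id x).mul (Real.hasDerivAt_cosh x))
        (mul_pos hx0 (Real.cosh_pos x)).ne'
    rw [hd.deriv]
    apply div_neg_of_neg_of_pos
    · have h1 : Real.cosh x ^ 2 - Real.sinh x ^ 2 = 1 := Real.cosh_sq_sub_sinh_sq x
      have h2 : 2 * x < Real.sinh (2 * x) := Real.self_lt_sinh_iff.mpr (by linarith)
      rw [Real.sinh_two_mul] at h2
      nlinarith
    · positivity

private lemma key (v : ℝ) (hv : 0 < v) (u : ℝ) (hu : 0 ≤ u) :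
    Real.log (Real.cosh u) ≤
      Real.log (Real.cosh v) + Real.sinh v / (2 * v * Real.cosh v) * (u ^ 2 - v ^ 2) := by
  set c : ℝ := Real.sinh v / (2 * v * Real.cosh v) with hc
  set H : ℝ → ℝ := fun u => Real.log (Real.cosh v) + c * (u ^ 2 - v ^ 2)
    - Real.log (Real.cosh u) with hH
  have hder : ∀ x : ℝ, HasDerivAt H (c * (2 * x) - Real.sinh x / Real.cosh x) x := by
    intro x
    have h0 : HasDerivAt (fun u : ℝ => u ^ 2 - v ^ 2) (2 * x) x := by
      simpa using (hasDerivAt_pow 2 x).sub_const (v ^ 2)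
    have h1 : HasDerivAt (fun u : ℝ => Real.log (Real.cosh v) + c * (u ^ 2 - v ^ 2))
        (c * (2 * x)) x := (h0.const_mul c).const_add _
    have h2 : HasDerivAt (fun u : ℝ => Real.log (Real.cosh u)) (Real.sinh x / Real.cosh x) x :=
      (Real.hasDerivAt_cosh x).log (Real.cosh_pos x).ne'
    exact h1.sub h2
  have hdiff : Differentiable ℝ H := fun x => (hder x).differentiableAt
  have hsign : ∀ x : ℝ, 0 < x → deriv H x =
      x * (Real.sinh v / (v * Real.cosh v) - Real.sinh x / (x * Real.cosh x)) := by
    intro x hx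
    rw [(hder x).deriv, hc]
    field_simp
  have hHv : H v = 0 := by simp [hH]
  have hkey : 0 ≤ H u := by
    rcases le_total u v with h | h
    · have hanti : AntitoneOn H (Icc 0 v) := by
        apply antitoneOn_of_deriv_nonpos (convex_Icc 0 v) hdiff.continuous.continuousOn
          hdiff.differentiableOn
        intro x hx
        rw [interior_Icc] at hx
        rw [hsign x hx.1]
        have := phi_anti (mem_Ioi.mpr hx.1) (mem_Ioi.mpr hv) hx.2
        simp only at this
        exact mul_nonpos_of_nonneg_of_nonpos hx.1.le (by linarith)
      have := hanti ⟨hu, h⟩ ⟨le_of_lt hv, le_refl v⟩ h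
      linarith [hHv ▸ this]
    · have hmono : MonotoneOn H (Ici v) := by
        apply monotoneOn_of_deriv_nonneg (convex_Ici v) hdiff.continuous.continuousOn
          hdiff.differentiableOn
        intro x hx
        rw [interior_Ici] at hx
        have hxpos : 0 < x := lt_trans hv hx
        rw [hsign x hxpos]
        have := phi_anti (mem_Ioi.mpr hv) (mem_Ioi.mpr hxpos) hx
        simp only at this
        exact mul_nonneg hxpos.le (by linarith)
      have := hmono (mem_Ici.mpr (le_refl v)) (mem_Ici.mpr h) h
      linarith [hHv ▸ this]
  simp only [hH] at hkey
  linarith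

private lemma key' (v : ℝ) (hv : 0 < v) (u : ℝ) :
    Real.log (Real.cosh u) ≤
      Real.log (Real.cosh v) + Real.sinh v / (2 * v * Real.cosh v) * (u ^ 2 - v ^ 2) := by
  have := key v hv |u| (abs_nonneg u)
  rwa [Real.cosh_abs, sq_abs] at this

private lemma log_one_add_exp (t : ℝ) :
    Real.log (1 + Real.exp t) = t / 2 + Real.log 2 + Real.log (Real.cosh (t / 2)) := by
  have e1 : Real.exp t = Real.exp (t / 2) * Real.exp (t / 2) := by
    rw [← Real.exp_add]; norm_num
  have h : 1 + Real.exp t = Real.exp (t / 2) * (2 * Real.cosh (t / 2)) := by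
    rw [Real.cosh_eq, Real.exp_neg, e1]
    have hz := (Real.exp_pos (t / 2)).ne'
    field_simp
    ring
  rw [h, Real.log_mul (Real.exp_pos _).ne' (by positivity), Real.log_exp,
    Real.log_mul two_ne_zero (Real.cosh_pos _).ne']
  ring

private lemma lam_eq (ξ : ℝ) (hξ : ξ ≠ 0) :
    lam ξ = Real.sinh (ξ / 2) / (4 * ξ * Real.cosh (ξ / 2)) := by
  unfold lam _root_.sigmoid
  have e1 : Real.exp ξ = Real.exp (ξ / 2) * Real.exp (ξ / 2) := by
    rw [← Real.exp_add]; norm_num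
  have ha : (0:ℝ) < Real.exp (ξ / 2) := Real.exp_pos _
  have hd : (0:ℝ) < 1 + Real.exp (-ξ) := by positivity
  rw [Real.sinh_eq, Real.cosh_eq, Real.exp_neg ξ, Real.exp_neg (ξ / 2), e1]
  have hcosh : (0:ℝ) < Real.exp (ξ/2) + (Real.exp (ξ/2))⁻¹ := by positivity
  field_simp
  ring

private lemma jj (ξ x : ℝ) (hξ : 0 < ξ) :
    Real.log (1 + Real.exp x) ≤
      (x - ξ) / 2 + lam ξ * (x ^ 2 - ξ ^ 2) + Real.log (1 + Real.exp ξ) := by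
  rw [log_one_add_exp x, log_one_add_exp ξ, lam_eq ξ hξ.ne']
  have hkey := key' (ξ / 2) (by linarith) (x / 2)
  have coeff : Real.sinh (ξ / 2) / (2 * (ξ / 2) * Real.cosh (ξ / 2)) * ((x / 2) ^ 2 - (ξ / 2) ^ 2)
      = Real.sinh (ξ / 2) / (4 * ξ * Real.cosh (ξ / 2)) * (x ^ 2 - ξ ^ 2) := by
    have h1 : Real.cosh (ξ / 2) ≠ 0 := (Real.cosh_pos _).ne'
    rw [show 2 * (ξ / 2) * Real.cosh (ξ / 2) = ξ * Real.cosh (ξ / 2) by ring,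
      show (x / 2) ^ 2 - (ξ / 2) ^ 2 = (x ^ 2 - ξ ^ 2) / 4 by ring,
      div_mul_div_comm, div_mul_eq_mul_div]
    congr 1
    ring
  rw [coeff] at hkey
  linarith

private lemma sum_exp_le_prod {ι : Type*} (s : Finset ι) (f : ι → ℝ) :
    ∑ i ∈ s, Real.exp (f i) ≤ ∏ i ∈ s, (1 + Real.exp (f i)) := by
  induction s using Finset.cons_induction with
  | empty => simp
  | cons a s ha ih =>
    rw [Finset.sum_cons, Finset.prod_cons]
    have h1 : (1:ℝ) ≤ ∏ i ∈ s, (1 + Real.exp (f i)) := by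
      have := Finset.prod_le_prod (s := s) (f := fun _ : ι => (1:ℝ))
        (g := fun i => 1 + Real.exp (f i)) (fun i _ => zero_le_one)
        (fun i _ => by
          show (1:ℝ) ≤ 1 + Real.exp (f i)
          nlinarith [Real.exp_pos (f i)])
      simpa using this
    nlinarith [Real.exp_pos (f a)]

/-- Bouchard's variational upper bound on the log-sum-exp function. -/
theorem logsumexp_variational_bound (c : ℕ) (hc : 1 ≤ c) (z : Fin c → ℝ) (α : ℝ)
    (ξ : Fin c → ℝ) (hξ : ∀ k, 0 < ξ k) :
    Real.log (∑ k, Real.exp (z k)) ≤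
      α + ∑ k, ((z k - α - ξ k) / 2 + lam (ξ k) * ((z k - α) ^ 2 - (ξ k) ^ 2)
        + Real.log (1 + Real.exp (ξ k))) := by
  have hne : (Finset.univ : Finset (Fin c)).Nonempty := ⟨⟨0, hc⟩, Finset.mem_univ _⟩
  have hpos : (0:ℝ) < ∑ k, Real.exp (z k - α) :=
    Finset.sum_pos (fun i _ => Real.exp_pos _) hne
  have hshift : Real.log (∑ k, Real.exp (z k)) = α + Real.log (∑ k, Real.exp (z k - α)) := by
    have h : ∑ k, Real.exp (z k) = Real.exp α * ∑ k, Real.exp (z k - α) := by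
      rw [Finset.mul_sum]
      refine Finset.sum_congr rfl fun k _ => ?_
      rw [← Real.exp_add]; ring_nf
    rw [h, Real.log_mul (Real.exp_pos _).ne' hpos.ne', Real.log_exp]
  have hA : Real.log (∑ k, Real.exp (z k - α)) ≤ ∑ k, Real.log (1 + Real.exp (z k - α)) :=
    calc Real.log (∑ k, Real.exp (z k - α))
        ≤ Real.log (∏ k, (1 + Real.exp (z k - α))) :=
          Real.log_le_log hpos (sum_exp_le_prod _ _)
      _ = ∑ k, Real.log (1 + Real.exp (z k - α)) :=
          Real.log_prod fun i _ => by positivity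
  have hB : ∑ k, Real.log (1 + Real.exp (z k - α)) ≤
      ∑ k, ((z k - α - ξ k) / 2 + lam (ξ k) * ((z k - α) ^ 2 - (ξ k) ^ 2)
        + Real.log (1 + Real.exp (ξ k))) := by
    refine Finset.sum_le_sum fun k _ => ?_
    have := jj (ξ k) (z k - α) (hξ k)
    linarith
  rw [hshift]
  linarith
end

section
/- Let c ≥ 1 be a natural number, let z ∈ ℝ^c, let α ∈ ℝ, and let ξ ∈ ℝ^c with ξ_k > 0 for every k. Then for every index j, softmax(z)_j = exp(z_j)/∑_{k=1}^{c} exp(z_k) ≥ exp( z_j − α − ∑_{k=1}^{c} [ (z_k − α − ξ_k)/2 + λ(ξ_k)·((z_k − α)² − ξ_k²) + ln(1 + exp(ξ_k)) ] ). -/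
lemma hasDerivAt_tanh (t : ℝ) : HasDerivAt Real.tanh (1 / Real.cosh t ^ 2) t := by
  have h := (Real.hasDerivAt_sinh t).div (Real.hasDerivAt_cosh t) (ne_of_gt (Real.cosh_pos t))
  have e : (Real.cosh t * Real.cosh t - Real.sinh t * Real.sinh t) / Real.cosh t ^ 2
      = 1 / Real.cosh t ^ 2 := by
    rw [show Real.cosh t * Real.cosh t - Real.sinh t * Real.sinh t
        = Real.cosh t ^ 2 - Real.sinh t ^ 2 by ring, Real.cosh_sq_sub_sinh_sq]
  rw [e] at h
  exact h.congr_of_eventuallyEq (by filter_upwards with x using (Real.tanh_eq_sinh_div_cosh x))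

lemma hasDerivAt_tanh_div (t : ℝ) (ht : t ≠ 0) :
    HasDerivAt (fun t => Real.tanh t / t)
      ((1 / Real.cosh t ^ 2 * t - Real.tanh t * 1) / t ^ 2) t :=
  (hasDerivAt_tanh t).div (hasDerivAt_id t) ht

lemma tanh_div_anti : AntitoneOn (fun t => Real.tanh t / t) (Set.Ioi (0:ℝ)) := by
  have hdiff : DifferentiableOn ℝ (fun t => Real.tanh t / t) (interior (Set.Ioi (0:ℝ))) := by
    rw [interior_Ioi]
    exact fun x hx => (hasDerivAt_tanh_div x (ne_of_gt hx)).differentiableAt.differentiableWithinAt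
  have hc : ContinuousOn (fun t => Real.tanh t / t) (Set.Ioi (0:ℝ)) := fun x hx =>
    (hasDerivAt_tanh_div x (ne_of_gt hx)).differentiableAt.continuousAt.continuousWithinAt
  apply antitoneOn_of_deriv_nonpos (convex_Ioi 0) hc hdiff
  intro t ht
  rw [interior_Ioi] at ht
  have ht0 : (0:ℝ) < t := ht
  rw [(hasDerivAt_tanh_div t (ne_of_gt ht0)).deriv]
  apply div_nonpos_of_nonpos_of_nonneg _ (sq_nonneg t)
  have hcosh : (0:ℝ) < Real.cosh t := Real.cosh_pos t
  have key : t ≤ Real.sinh t * Real.cosh t := by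
    have h2 : 2 * t ≤ Real.sinh (2 * t) := Real.self_le_sinh_iff.2 (by linarith)
    rw [Real.sinh_two_mul] at h2; linarith
  rw [Real.tanh_eq_sinh_div_cosh]
  have e : 1 / Real.cosh t ^ 2 * t - Real.sinh t / Real.cosh t * 1
      = (t - Real.sinh t * Real.cosh t) / Real.cosh t ^ 2 := by
    field_simp
  rw [e]
  exact div_nonpos_of_nonpos_of_nonneg (by linarith) (by positivity)

lemma sigmoid_sub_half (x : ℝ) : sigmoid x - 1 / 2 = Real.tanh (x / 2) / 2 := by
  have hx : -x = -(x/2) + -(x/2) := by ring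
  rw [sigmoid, Real.tanh_eq_sinh_div_cosh, Real.sinh_eq, Real.cosh_eq, hx, Real.exp_add]
  set a := Real.exp (x/2) with ha
  set b := Real.exp (-(x/2)) with hb
  have h2 : a * b = 1 := by rw [ha, hb, ← Real.exp_add]; simp
  have p1 : (0:ℝ) < a := Real.exp_pos _
  have p2 : (0:ℝ) < b := Real.exp_pos _
  field_simp
  nlinarith [h2, p1, p2]

lemma lam_eq_s1 (ξ : ℝ) : lam ξ = (Real.tanh (ξ / 2) / (ξ / 2)) / 8 := by
  rw [lam, sigmoid_sub_half]
  rcases eq_or_ne ξ 0 with h | h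
  · simp [h]
  · field_simp; ring

lemma lam_anti {a b : ℝ} (ha : 0 < a) (hab : a ≤ b) : lam b ≤ lam a := by
  rw [lam_eq_s1, lam_eq_s1]
  have h : Real.tanh (b/2) / (b/2) ≤ Real.tanh (a/2) / (a/2) :=
    tanh_div_anti (Set.mem_Ioi.2 (by linarith : (0:ℝ) < a/2))
      (Set.mem_Ioi.2 (by linarith : (0:ℝ) < b/2)) (by linarith)
  linarith

lemma sigmoid_eq_lam (x : ℝ) : sigmoid x - 1 / 2 = 2 * lam x * x := by
  rw [lam]
  rcases eq_or_ne x 0 with h | h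
  · simp [h, sigmoid]; norm_num
  · field_simp

lemma sigmoid_eq (x : ℝ) : sigmoid x = Real.exp x / (1 + Real.exp x) := by
  rw [sigmoid, Real.exp_neg]
  have h : (0:ℝ) < Real.exp x := Real.exp_pos x
  field_simp
  ring

noncomputable def phi (ξ x : ℝ) : ℝ :=
  (x - ξ) / 2 + lam ξ * (x ^ 2 - ξ ^ 2) + Real.log (1 + Real.exp ξ) - Real.log (1 + Real.exp x)

lemma hasDerivAt_phi (ξ x : ℝ) :
    HasDerivAt (phi ξ) (1 / 2 + lam ξ * (2 * x) - sigmoid x) x := by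
  have hlog : HasDerivAt (fun x => Real.log (1 + Real.exp x)) (sigmoid x) x := by
    have h := (((Real.hasDerivAt_exp x).const_add 1)).log
      (by positivity : 1 + Real.exp x ≠ 0)
    rw [sigmoid_eq]; exact h
  have h1 : HasDerivAt (fun x : ℝ => (x - ξ) / 2) (1 / 2) x := by
    simpa using ((hasDerivAt_id x).sub_const ξ).div_const 2
  have h2 : HasDerivAt (fun x : ℝ => lam ξ * (x ^ 2 - ξ ^ 2)) (lam ξ * (2 * x)) x := by
    have := ((hasDerivAt_pow 2 x).sub_const (ξ ^ 2)).const_mul (lam ξ)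
    simpa [mul_comm] using this
  show HasDerivAt (fun x => (x - ξ) / 2 + lam ξ * (x ^ 2 - ξ ^ 2) + Real.log (1 + Real.exp ξ)
    - Real.log (1 + Real.exp x)) _ x
  exact ((h1.add h2).add_const (Real.log (1 + Real.exp ξ))).sub hlog

lemma phi_nonneg_of_nonneg {ξ : ℝ} (hξ : 0 < ξ) {x : ℝ} (hx : 0 ≤ x) : 0 ≤ phi ξ x := by
  have hxi : phi ξ ξ = 0 := by simp [phi]
  have hcont : ∀ s : Set ℝ, ContinuousOn (phi ξ) s := fun s x _ =>
    (hasDerivAt_phi ξ x).differentiableAt.continuousAt.continuousWithinAt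
  have hdiff : ∀ s : Set ℝ, DifferentiableOn ℝ (phi ξ) s := fun s x _ =>
    (hasDerivAt_phi ξ x).differentiableAt.differentiableWithinAt
  rcases le_or_gt x ξ with h | h
  · -- antitone on [0, ξ]
    have hanti : AntitoneOn (phi ξ) (Set.Icc 0 ξ) := by
      apply antitoneOn_of_deriv_nonpos (convex_Icc 0 ξ) (hcont _) ((hdiff _).mono interior_subset)
      intro t ht
      rw [interior_Icc] at ht
      rw [(hasDerivAt_phi ξ t).deriv]
      have ht0 : 0 < t := ht.1
      have hl : lam ξ ≤ lam t := lam_anti ht0 (le_of_lt ht.2)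
      have hs : sigmoid t - 1 / 2 = 2 * lam t * t := sigmoid_eq_lam t
      nlinarith
    have := hanti (Set.mem_Icc.2 ⟨hx, h⟩) (Set.mem_Icc.2 ⟨le_of_lt hξ, le_refl ξ⟩) h
    rw [hxi] at this; exact this
  · -- monotone on [ξ, ∞)
    have hmono : MonotoneOn (phi ξ) (Set.Ici ξ) := by
      apply monotoneOn_of_deriv_nonneg (convex_Ici ξ) (hcont _) ((hdiff _).mono interior_subset)
      intro t ht
      rw [interior_Ici] at ht
      rw [(hasDerivAt_phi ξ t).deriv]
      have ht0 : 0 < t := lt_trans hξ ht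
      have hl : lam t ≤ lam ξ := lam_anti hξ (le_of_lt ht)
      have hs : sigmoid t - 1 / 2 = 2 * lam t * t := sigmoid_eq_lam t
      nlinarith
    have := hmono (Set.mem_Ici.2 (le_refl ξ)) (Set.mem_Ici.2 (le_of_lt h)) (le_of_lt h)
    rw [hxi] at this; exact this

lemma jj_bound {ξ : ℝ} (hξ : 0 < ξ) (x : ℝ) :
    Real.log (1 + Real.exp x) ≤
      (x - ξ) / 2 + lam ξ * (x ^ 2 - ξ ^ 2) + Real.log (1 + Real.exp ξ) := by
  have key : 0 ≤ phi ξ x := by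
    rcases le_or_gt 0 x with h | h
    · exact phi_nonneg_of_nonneg hξ h
    · have h2 : phi ξ x = phi ξ (-x) := by
        have hlog : Real.log (1 + Real.exp x) = Real.log (1 + Real.exp (-x)) + x := by
          have : 1 + Real.exp x = (1 + Real.exp (-x)) * Real.exp x := by
            rw [add_mul, Real.exp_neg]
            have := Real.exp_pos x
            field_simp
            ring
          rw [this, Real.log_mul (by positivity) (by positivity), Real.log_exp]
        rw [phi, phi, hlog]; ring
      rw [h2]
      exact phi_nonneg_of_nonneg hξ (by linarith)
  rw [phi] at key; linarith

lemma one_add_sum_le_prod {ι : Type*} (s : Finset ι) (f : ι → ℝ) (hf : ∀ k ∈ s, 0 ≤ f k) :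
    1 + ∑ k ∈ s, f k ≤ ∏ k ∈ s, (1 + f k) := by
  induction s using Finset.cons_induction with
  | empty => simp
  | cons a s ha ih =>
    rw [Finset.sum_cons, Finset.prod_cons]
    have h1 : 0 ≤ f a := hf a (Finset.mem_cons_self a s)
    have h2 : ∀ k ∈ s, 0 ≤ f k := fun k hk => hf k (Finset.mem_cons_of_mem hk)
    have ih' := ih h2
    have hs : 0 ≤ ∑ k ∈ s, f k := Finset.sum_nonneg h2
    nlinarith

/-- The variational likelihood obtained from the log-sum-exp bound is a lower bound on
the true softmax likelihood. -/
theorem softmax_ge_variational_lower_bound (c : ℕ) (hc : 1 ≤ c) (z : Fin c → ℝ) (α : ℝ)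
    (ξ : Fin c → ℝ) (hξ : ∀ k, 0 < ξ k) (j : Fin c) :
    Real.exp (z j) / ∑ k, Real.exp (z k) ≥
      Real.exp (z j - α - ∑ k, ((z k - α - ξ k) / 2 + lam (ξ k) * ((z k - α) ^ 2 - (ξ k) ^ 2)
        + Real.log (1 + Real.exp (ξ k)))) := by
  set B : Fin c → ℝ := fun k => (z k - α - ξ k) / 2 + lam (ξ k) * ((z k - α) ^ 2 - (ξ k) ^ 2)
    + Real.log (1 + Real.exp (ξ k)) with hB
  have hS : (0:ℝ) < ∑ k, Real.exp (z k) := by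
    apply Finset.sum_pos (fun k _ => Real.exp_pos _)
    exact Finset.univ_nonempty_iff.2 ⟨j⟩
  have key : ∑ k, Real.exp (z k) ≤ Real.exp (α + ∑ k, B k) := by
    have hkb : ∀ k : Fin c, 1 + Real.exp (z k - α) ≤ Real.exp (B k) := by
      intro k
      have := jj_bound (hξ k) (z k - α)
      calc 1 + Real.exp (z k - α)
          = Real.exp (Real.log (1 + Real.exp (z k - α))) := by
            rw [Real.exp_log (by positivity)]
        _ ≤ Real.exp (B k) := Real.exp_le_exp.2 (by rw [hB]; dsimp; linarith)
    calc ∑ k, Real.exp (z k) = Real.exp α * ∑ k, Real.exp (z k - α) := by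
          rw [Finset.mul_sum]
          congr 1; ext k; rw [← Real.exp_add]; ring_nf
      _ ≤ Real.exp α * ∏ k, (1 + Real.exp (z k - α)) := by
          apply mul_le_mul_of_nonneg_left _ (le_of_lt (Real.exp_pos α))
          have h := one_add_sum_le_prod Finset.univ (fun k => Real.exp (z k - α))
            (fun k _ => le_of_lt (Real.exp_pos _))
          linarith
      _ ≤ Real.exp α * ∏ k, Real.exp (B k) := by
          apply mul_le_mul_of_nonneg_left _ (le_of_lt (Real.exp_pos α))
          apply Finset.prod_le_prod (fun k _ => by positivity) (fun k _ => hkb k)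
      _ = Real.exp (α + ∑ k, B k) := by rw [Real.exp_add, Real.exp_sum]
  rw [ge_iff_le, show z j - α - ∑ k, B k = z j - (α + ∑ k, B k) by ring,
    Real.exp_sub, div_le_div_iff₀ (Real.exp_pos _) hS]
  have := Real.exp_pos (z j)
  nlinarith
end

section
/- For every x ∈ ℝ and every ξ > 0, ln(1 + exp(x)) ≤ x/2 − ξ/2 + λ(ξ)·(x² − ξ²) + ln(1 + exp(ξ)). -/
lemma le_sinh_mul_cosh {a : ℝ} (ha : 0 ≤ a) : a ≤ Real.sinh a * Real.cosh a := by
  rcases eq_or_lt_of_le ha with h | h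
  · simp [← h]
  · have h2 : 2 * a < Real.sinh (2 * a) := Real.self_lt_sinh_iff.2 (by linarith)
    rw [Real.sinh_two_mul] at h2
    linarith

lemma hasDerivAt_tanh_s2 (u : ℝ) :
    HasDerivAt (fun u : ℝ => Real.sinh u / Real.cosh u) (1 / Real.cosh u ^ 2) u := by
  have hc : Real.cosh u ≠ 0 := (Real.cosh_pos u).ne'
  have := (Real.hasDerivAt_sinh u).div (Real.hasDerivAt_cosh u) hc
  refine this.congr_deriv ?_
  rw [← Real.cosh_sq_sub_sinh_sq u]; ring

/-- tanh ratio lemma: for 0 ≤ a ≤ b, a * tanh b ≤ b * tanh a. -/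
lemma tanh_ratio {a b : ℝ} (ha : 0 ≤ a) (hab : a ≤ b) :
    a * (Real.sinh b / Real.cosh b) ≤ b * (Real.sinh a / Real.cosh a) := by
  rcases eq_or_lt_of_le ha with h | ha'
  · simp [← h]
  set j : ℝ → ℝ := fun u => u * (Real.sinh a / Real.cosh a) - a * (Real.sinh u / Real.cosh u)
    with hj
  have hderiv : ∀ u : ℝ,
      HasDerivAt j (Real.sinh a / Real.cosh a - a * (1 / Real.cosh u ^ 2)) u := fun u =>
    (((hasDerivAt_id u).mul_const _).congr_deriv (by ring)).sub ((hasDerivAt_tanh_s2 u).const_mul a)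
  have hmono : MonotoneOn j (Set.Ici a) := by
    apply monotoneOn_of_deriv_nonneg (convex_Ici a)
    · exact Continuous.continuousOn (by
        fun_prop (disch := intro x; exact (Real.cosh_pos x).ne'))
    · exact fun u _ => (hderiv u).differentiableAt.differentiableWithinAt
    · intro u hu
      rw [interior_Ici] at hu
      rw [(hderiv u).deriv]
      have hca : Real.cosh a ≤ Real.cosh u := by
        rw [Real.cosh_le_cosh, abs_of_nonneg ha, abs_of_nonneg (ha.trans hu.le)]
        exact hu.le
      have hcap := Real.cosh_pos a
      have hcup := Real.cosh_pos u
      have hsa : 0 ≤ Real.sinh a := Real.sinh_nonneg_iff.2 ha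
      rw [sub_nonneg, mul_one_div, div_le_div_iff₀ (by positivity) hcap]
      nlinarith [le_sinh_mul_cosh ha, mul_le_mul_of_nonneg_left hca hsa]
  have hjb := hmono Set.self_mem_Ici (Set.mem_Ici.2 hab) hab
  have hza : j a = 0 := by simp [hj]
  rw [hza] at hjb
  simpa [hj, sub_nonneg] using hjb

/-- The Jaakkola–Jordan quadratic bound on the logistic log-partition function. -/
theorem jaakkola_jordan_bound (x ξ : ℝ) (hξ : 0 < ξ) :
    Real.log (1 + Real.exp x) ≤
      x / 2 - ξ / 2 + lam ξ * (x ^ 2 - ξ ^ 2) + Real.log (1 + Real.exp ξ) := by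
  set G : ℝ → ℝ := fun y => Real.log (2 * Real.cosh (y / 2)) with hG
  have hGlog : ∀ y : ℝ, Real.log (1 + Real.exp y) = y / 2 + G y := by
    intro y
    have h2 : 2 * Real.cosh (y / 2) = Real.exp (-(y / 2)) * (1 + Real.exp y) := by
      rw [Real.cosh_eq, mul_add, ← Real.exp_add, mul_one]
      ring_nf
    have hpos : (0:ℝ) < 1 + Real.exp y := by positivity
    rw [hG]
    simp only
    rw [h2, Real.log_mul (Real.exp_ne_zero _) hpos.ne', Real.log_exp]
    ring
  have hlam : lam ξ = Real.sinh (ξ / 2) / Real.cosh (ξ / 2) / (4 * ξ) := by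
    rw [lam, sigmoid, Real.sinh_eq, Real.cosh_eq, Real.exp_neg, Real.exp_neg]
    have hE : (0:ℝ) < Real.exp (ξ / 2) := Real.exp_pos _
    have hEsq : Real.exp ξ = Real.exp (ξ / 2) * Real.exp (ξ / 2) := by
      rw [← Real.exp_add]; ring_nf
    rw [hEsq]
    have h1 : (0:ℝ) < 1 + (Real.exp (ξ / 2) * Real.exp (ξ / 2))⁻¹ := by positivity
    have h2 : (0:ℝ) < Real.exp (ξ / 2) + (Real.exp (ξ / 2))⁻¹ := by positivity
    field_simp
    ring
  have hGderiv : ∀ y : ℝ, HasDerivAt G (Real.sinh (y / 2) / (2 * Real.cosh (y / 2))) y := by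
    intro y
    have hc : (2 : ℝ) * Real.cosh (y / 2) ≠ 0 := by positivity
    have h1 : HasDerivAt (fun y : ℝ => Real.cosh (y / 2)) (Real.sinh (y / 2) * (1 / 2)) y :=
      by have := (Real.hasDerivAt_cosh (y / 2)).comp y ((hasDerivAt_id' y).div_const 2); exact this
    exact ((h1.const_mul 2).log hc).congr_deriv (by field_simp)
  set F : ℝ → ℝ := fun y => lam ξ * y ^ 2 - G y with hF
  have hFderiv : ∀ y : ℝ,
      HasDerivAt F (lam ξ * (2 * y) - Real.sinh (y / 2) / (2 * Real.cosh (y / 2))) y :=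
    fun y => (((hasDerivAt_pow 2 y).const_mul (lam ξ)).congr_deriv (by ring)).sub (hGderiv y)
  have hFdiff : Differentiable ℝ F := fun y => (hFderiv y).differentiableAt
  have hξ2 : (0:ℝ) < 2 * ξ := by linarith
  have hderiveq : ∀ y : ℝ,
      lam ξ * (2 * y) - Real.sinh (y / 2) / (2 * Real.cosh (y / 2)) =
        (y * (Real.sinh (ξ / 2) / Real.cosh (ξ / 2)) -
          ξ * (Real.sinh (y / 2) / Real.cosh (y / 2))) / (2 * ξ) := by
    intro y
    have hcy : Real.cosh (y / 2) ≠ 0 := (Real.cosh_pos _).ne'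
    have hcξ : Real.cosh (ξ / 2) ≠ 0 := (Real.cosh_pos _).ne'
    rw [hlam]
    field_simp
    ring
  have hanti : AntitoneOn F (Set.Icc 0 ξ) := by
    apply antitoneOn_of_deriv_nonpos (convex_Icc 0 ξ) hFdiff.continuous.continuousOn
      (fun y _ => (hFdiff y).differentiableWithinAt)
    intro y hy
    rw [interior_Icc] at hy
    rw [(hFderiv y).deriv, hderiveq y]
    apply div_nonpos_of_nonpos_of_nonneg _ hξ2.le
    have hr := tanh_ratio (show (0:ℝ) ≤ y / 2 by linarith [hy.1])
      (show y / 2 ≤ ξ / 2 by linarith [hy.2])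
    linarith
  have hmono : MonotoneOn F (Set.Ici ξ) := by
    apply monotoneOn_of_deriv_nonneg (convex_Ici ξ) hFdiff.continuous.continuousOn
      (fun y _ => (hFdiff y).differentiableWithinAt)
    intro y hy
    rw [interior_Ici] at hy
    rw [(hFderiv y).deriv, hderiveq y]
    apply div_nonneg _ hξ2.le
    have hr := tanh_ratio (show (0:ℝ) ≤ ξ / 2 by linarith)
      (show ξ / 2 ≤ y / 2 by linarith [(Set.mem_Ioi.1 hy).le])
    linarith
  have key0 : ∀ y : ℝ, 0 ≤ y → F ξ ≤ F y := by
    intro y hy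
    rcases le_total y ξ with h2 | h2
    · exact hanti (Set.mem_Icc.2 ⟨hy, h2⟩) (Set.mem_Icc.2 ⟨hξ.le, le_refl ξ⟩) h2
    · exact hmono Set.self_mem_Ici (Set.mem_Ici.2 h2) h2
  have hFeven : ∀ y : ℝ, F (-y) = F y := by
    intro y
    simp [hF, hG, neg_div, Real.cosh_neg, neg_sq]
  have key : F ξ ≤ F x := by
    rcases le_total 0 x with h | h
    · exact key0 x h
    · rw [← hFeven x]; exact key0 (-x) (by linarith)
  have hx : lam ξ * ξ ^ 2 - G ξ ≤ lam ξ * x ^ 2 - G x := key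
  rw [hGlog x, hGlog ξ]
  linarith
end

section
/- Let c ≥ 1 be a natural number, let z ∈ ℝ^c, and let α ∈ ℝ. Then ln(∑_{k=1}^{c} exp(z_k)) ≤ α + ∑_{k=1}^{c} ln(1 + exp(z_k − α)). -/
lemma sum_le_prod_one_add {ι : Type*} (s : Finset ι) (f : ι → ℝ)
    (hf : ∀ i ∈ s, 0 ≤ f i) : ∑ i ∈ s, f i ≤ ∏ i ∈ s, (1 + f i) := by
  classical
  induction s using Finset.induction_on with
  | empty => simp
  | @insert a t h ih =>
    rw [Finset.sum_insert h, Finset.prod_insert h]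
    have ht : ∀ i ∈ t, 0 ≤ f i := fun i hi => hf i (Finset.mem_insert_of_mem hi)
    have ha : 0 ≤ f a := hf a (Finset.mem_insert_self a t)
    have h1 : (1:ℝ) ≤ ∏ i ∈ t, (1 + f i) := by
      have := Finset.prod_le_prod (f := fun _ => (1:ℝ)) (g := fun i => 1 + f i)
        (fun i _ => zero_le_one) (fun i hi => by simpa using ht i hi)
      simpa using this
    have hprod : 0 ≤ ∏ i ∈ t, (1 + f i) := by linarith
    calc f a + ∑ i ∈ t, f i ≤ f a * ∏ i ∈ t, (1 + f i) + ∏ i ∈ t, (1 + f i) := by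
          have := ih ht
          nlinarith
      _ = (1 + f a) * ∏ i ∈ t, (1 + f i) := by ring

/-- The log-sum-exp function is bounded by the shift `α` plus a sum of logistic
log-partition terms. -/
theorem logsumexp_le_shift_add_sum_log_one_add_exp (c : ℕ) (hc : 1 ≤ c) (z : Fin c → ℝ)
    (α : ℝ) :
    Real.log (∑ k, Real.exp (z k)) ≤ α + ∑ k, Real.log (1 + Real.exp (z k - α)) := by
  have hpos : ∀ k : Fin c, (0:ℝ) < 1 + Real.exp (z k - α) := fun k => by
    positivity
  have h1 : ∑ k, Real.exp (z k) = Real.exp α * ∑ k, Real.exp (z k - α) := by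
    rw [Finset.mul_sum]
    congr 1; ext k
    rw [← Real.exp_add]; ring_nf
  have h2 : ∑ k, Real.exp (z k - α) ≤ ∏ k, (1 + Real.exp (z k - α)) :=
    sum_le_prod_one_add _ _ (fun i _ => (Real.exp_pos _).le)
  have hspos : (0:ℝ) < ∑ k, Real.exp (z k - α) := by
    have : (Finset.univ : Finset (Fin c)).Nonempty := by
      have : Nonempty (Fin c) := ⟨⟨0, hc⟩⟩
      exact Finset.univ_nonempty
    exact Finset.sum_pos (fun i _ => Real.exp_pos _) this
  calc Real.log (∑ k, Real.exp (z k))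
      = α + Real.log (∑ k, Real.exp (z k - α)) := by
        rw [h1, Real.log_mul (Real.exp_ne_zero _) (ne_of_gt hspos), Real.log_exp]
    _ ≤ α + Real.log (∏ k, (1 + Real.exp (z k - α))) := by
        have := Real.log_le_log hspos h2
        linarith
    _ = α + ∑ k, Real.log (1 + Real.exp (z k - α)) := by
        rw [Real.log_prod (fun k _ => (hpos k).ne')]
end

section
/- The function g : (0, ∞) → ℝ defined by g(t) = ln(1 + exp(√t)) − √t/2 is concave on (0, ∞). -/
open Real Set

private noncomputable def jjF (x : ℝ) : ℝ := (Real.exp x - 1) / ((Real.exp x + 1) * x)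

private lemma jjF_hasDerivAt {x : ℝ} (hx : 0 < x) :
    HasDerivAt jjF
      ((Real.exp x * ((Real.exp x + 1) * x) -
        (Real.exp x - 1) * (Real.exp x * x + (Real.exp x + 1))) / ((Real.exp x + 1) * x) ^ 2) x := by
  have hD : (Real.exp x + 1) * x ≠ 0 := by positivity
  have h1 : HasDerivAt (fun x => Real.exp x - 1) (Real.exp x) x :=
    (Real.hasDerivAt_exp x).sub_const 1
  have h2 : HasDerivAt (fun x => (Real.exp x + 1) * x) (Real.exp x * x + (Real.exp x + 1)) x := by
    have := ((Real.hasDerivAt_exp x).add_const 1).fun_mul (hasDerivAt_id' x)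
    simpa [mul_one] using this
  exact h1.div h2 hD

private lemma jjF_deriv_neg {x : ℝ} (hx : 0 < x) : deriv jjF x < 0 := by
  rw [(jjF_hasDerivAt hx).deriv]
  have hnum : Real.exp x * ((Real.exp x + 1) * x) -
      (Real.exp x - 1) * (Real.exp x * x + (Real.exp x + 1)) =
      2 * x * Real.exp x - Real.exp x ^ 2 + 1 := by ring
  rw [hnum]
  have hs : x < Real.sinh x := Real.self_lt_sinh_iff.mpr hx
  rw [Real.sinh_eq] at hs
  have he : Real.exp (-x) = (Real.exp x)⁻¹ := Real.exp_neg x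
  have hep : 0 < Real.exp x := Real.exp_pos x
  have hden : 0 < ((Real.exp x + 1) * x) ^ 2 := by positivity
  apply div_neg_of_neg_of_pos _ hden
  rw [he] at hs
  have hinv : (Real.exp x)⁻¹ * Real.exp x = 1 := inv_mul_cancel₀ (ne_of_gt hep)
  nlinarith [mul_lt_mul_of_pos_right hs hep]

private lemma jjF_antitone : AntitoneOn jjF (Set.Ioi (0 : ℝ)) := by
  have : StrictAntiOn jjF (Set.Ioi (0 : ℝ)) := by
    apply strictAntiOn_of_deriv_neg (convex_Ioi 0)
    · intro x hx
      exact ((jjF_hasDerivAt hx).differentiableAt.continuousAt).continuousWithinAt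
    · intro x hx
      rw [interior_Ioi] at hx
      exact jjF_deriv_neg hx
  exact this.antitoneOn

private lemma jjG_hasDerivAt {t : ℝ} (ht : 0 < t) :
    HasDerivAt (fun t : ℝ => Real.log (1 + Real.exp (Real.sqrt t)) - Real.sqrt t / 2)
      (jjF (Real.sqrt t) / 4) t := by
  set x := Real.sqrt t with hxdef
  have hxpos : 0 < x := Real.sqrt_pos.mpr ht
  have hsqrt : HasDerivAt Real.sqrt (1 / (2 * x)) t :=
    Real.hasDerivAt_sqrt (ne_of_gt ht)
  have hexp : HasDerivAt (fun t => Real.exp (Real.sqrt t)) (Real.exp x * (1 / (2 * x))) t :=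
    (Real.hasDerivAt_exp x).comp t hsqrt
  have hpos : 1 + Real.exp x ≠ 0 := by positivity
  have hlog : HasDerivAt (fun t => Real.log (1 + Real.exp (Real.sqrt t)))
      ((Real.exp x * (1 / (2 * x))) / (1 + Real.exp x)) t := by
    have h1 : HasDerivAt (fun t => 1 + Real.exp (Real.sqrt t))
        (Real.exp x * (1 / (2 * x))) t := hexp.const_add 1
    exact h1.log hpos
  have h := hlog.sub (hsqrt.div_const 2)
  refine h.congr_deriv ?_
  unfold jjF
  have hex : 0 < Real.exp x := Real.exp_pos x
  field_simp
  ring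

/-- The even part of the logistic log-partition function, viewed as a function of
`t = x²`, is concave on `(0, ∞)`. -/
theorem concaveOn_log_one_add_exp_sqrt_sub_half_sqrt :
    ConcaveOn ℝ (Set.Ioi (0 : ℝ))
      (fun t : ℝ => Real.log (1 + Real.exp (Real.sqrt t)) - Real.sqrt t / 2) := by
  apply AntitoneOn.concaveOn_of_deriv (convex_Ioi 0)
  · intro t ht
    exact ((jjG_hasDerivAt ht).differentiableAt.continuousAt).continuousWithinAt
  · rw [interior_Ioi]
    intro t ht
    exact (jjG_hasDerivAt ht).differentiableAt.differentiableWithinAt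
  · rw [interior_Ioi]
    intro s hs t ht hst
    rw [(jjG_hasDerivAt hs).deriv, (jjG_hasDerivAt ht).deriv]
    have hs' : Real.sqrt s ∈ Set.Ioi (0:ℝ) := Real.sqrt_pos.mpr hs
    have ht' : Real.sqrt t ∈ Set.Ioi (0:ℝ) := Real.sqrt_pos.mpr ht
    have := jjF_antitone hs' ht' (Real.sqrt_le_sqrt hst)
    linarith
end

section
/- Let t > 0. Then for every ξ > 0, −ξ/2 + λ(ξ)·(t − ξ²) + ln(1 + exp(ξ)) ≥ −√t/2 + ln(1 + exp(√t)), with equality when ξ = √t. In other words, the map ξ ↦ −ξ/2 + λ(ξ)·(t − ξ²) + ln(1 + exp(ξ)) on (0, ∞) attains its global minimum at ξ = √t. -/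
lemma sigmoid_hasDerivAt (x : ℝ) :
    HasDerivAt sigmoid (Real.exp (-x) / (1 + Real.exp (-x)) ^ 2) x := by
  have h0 : HasDerivAt (fun y : ℝ => Real.exp (-y)) (Real.exp (-x) * (-1)) x :=
    (Real.hasDerivAt_exp (-x)).comp x (hasDerivAt_neg x)
  have h1 : HasDerivAt (fun y : ℝ => 1 + Real.exp (-y)) (Real.exp (-x) * (-1)) x := by
    exact h0.const_add 1
  have h2 := h1.inv (by positivity)
  have : sigmoid = fun y : ℝ => (1 + Real.exp (-y))⁻¹ := by
    funext y; simp [sigmoid, one_div]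
  rw [this]
  refine h2.congr_deriv ?_
  ring

lemma lam_hasDerivAt {x : ℝ} (hx : x ≠ 0) :
    HasDerivAt lam
      ((Real.exp (-x) / (1 + Real.exp (-x)) ^ 2 * (2 * x) - (sigmoid x - 1 / 2) * 2) /
        (2 * x) ^ 2) x := by
  have hN := (sigmoid_hasDerivAt x).sub_const (1 / 2)
  have hD : HasDerivAt (fun y : ℝ => 2 * y) 2 x := by
    simpa using (hasDerivAt_id x).const_mul 2
  exact hN.div hD (by simp [hx])

lemma lam_antitoneOn : AntitoneOn lam (Set.Ioi (0 : ℝ)) := by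
  apply antitoneOn_of_deriv_nonpos (convex_Ioi 0)
  · intro x hx
    exact (lam_hasDerivAt (ne_of_gt hx)).continuousAt.continuousWithinAt
  · intro x hx
    rw [interior_Ioi] at hx
    exact (lam_hasDerivAt (ne_of_gt hx)).differentiableAt.differentiableWithinAt
  · intro x hx
    rw [interior_Ioi] at hx
    rw [(lam_hasDerivAt (ne_of_gt hx)).deriv]
    apply div_nonpos_of_nonpos_of_nonneg _ (by positivity)
    rw [sub_nonpos]
    have he : 0 < Real.exp (-x) := Real.exp_pos _
    have h1 : (0 : ℝ) < 1 + Real.exp (-x) := by positivity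
    have hs : x ≤ Real.sinh x := Real.self_le_sinh_iff.mpr hx.le
    rw [Real.sinh_eq] at hs
    have hEe : Real.exp x * Real.exp (-x) = 1 := by
      rw [← Real.exp_add]; simp
    have key : 2 * x * Real.exp (-x) ≤ 1 - Real.exp (-x) ^ 2 := by nlinarith
    have h2 : (sigmoid x - 1 / 2) * 2 = (1 - Real.exp (-x)) / (1 + Real.exp (-x)) := by
      rw [sigmoid]; field_simp; ring
    rw [h2, div_mul_eq_mul_div, div_le_div_iff₀ (by positivity) h1]
    nlinarith [key, h1.le]

lemma phi_hasDerivAt (c v : ℝ) :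
    HasDerivAt (fun v => c * v ^ 2 + v / 2 - Real.log (1 + Real.exp v))
      (2 * c * v + 1 / 2 - sigmoid v) v := by
  have h1 : HasDerivAt (fun v : ℝ => c * v ^ 2) (c * (2 * v ^ 1)) v :=
    (hasDerivAt_pow 2 v).const_mul c
  have h2 : HasDerivAt (fun v : ℝ => v / 2) (1 / 2) v := by
    simpa using (hasDerivAt_id v).div_const 2
  have h3 : HasDerivAt (fun v : ℝ => Real.log (1 + Real.exp v))
      (Real.exp v / (1 + Real.exp v)) v := by
    have := ((Real.hasDerivAt_exp v).const_add 1).log (by positivity)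
    simpa using this
  have h := (h1.add h2).sub h3
  refine h.congr_deriv ?_
  rw [sigmoid_eq]; ring

lemma sigmoid_lam {v : ℝ} (hv : v ≠ 0) : sigmoid v - 1 / 2 = 2 * v * lam v := by
  rw [lam]; field_simp

lemma phi_le {a b : ℝ} (ha : 0 < a) (hb : 0 < b) :
    lam a * a ^ 2 + a / 2 - Real.log (1 + Real.exp a) ≤
      lam a * b ^ 2 + b / 2 - Real.log (1 + Real.exp b) := by
  set Φ : ℝ → ℝ := fun v => lam a * v ^ 2 + v / 2 - Real.log (1 + Real.exp v) with hΦ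
  have hderiv : ∀ v : ℝ, deriv Φ v = 2 * lam a * v + 1 / 2 - sigmoid v :=
    fun v => (phi_hasDerivAt (lam a) v).deriv
  have hsign : ∀ v : ℝ, 0 < v → deriv Φ v = 2 * v * (lam a - lam v) := by
    intro v hv
    rw [hderiv v]
    have := sigmoid_lam (ne_of_gt hv)
    linarith [this]
  rcases le_total a b with hab | hab
  · have hmono : MonotoneOn Φ (Set.Icc a b) := by
      apply monotoneOn_of_deriv_nonneg (convex_Icc a b)
      · exact fun v _ => (phi_hasDerivAt (lam a) v).continuousAt.continuousWithinAt
      · intro v hv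
        exact (phi_hasDerivAt (lam a) v).differentiableAt.differentiableWithinAt
      · intro v hv
        rw [interior_Icc] at hv
        have hv0 : 0 < v := lt_trans ha hv.1
        rw [hsign v hv0]
        have hle : lam v ≤ lam a :=
          lam_antitoneOn (Set.mem_Ioi.mpr ha) (Set.mem_Ioi.mpr hv0) hv.1.le
        nlinarith
    exact hmono (Set.left_mem_Icc.mpr hab) (Set.right_mem_Icc.mpr hab) hab
  · have hanti : AntitoneOn Φ (Set.Icc b a) := by
      apply antitoneOn_of_deriv_nonpos (convex_Icc b a)
      · exact fun v _ => (phi_hasDerivAt (lam a) v).continuousAt.continuousWithinAt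
      · intro v hv
        exact (phi_hasDerivAt (lam a) v).differentiableAt.differentiableWithinAt
      · intro v hv
        rw [interior_Icc] at hv
        have hv0 : 0 < v := lt_trans hb hv.1
        rw [hsign v hv0]
        have hle : lam a ≤ lam v :=
          lam_antitoneOn (Set.mem_Ioi.mpr hv0) (Set.mem_Ioi.mpr ha) hv.2.le
        nlinarith
    exact hanti (Set.left_mem_Icc.mpr hab) (Set.right_mem_Icc.mpr hab) hab

/-- Optimality of the M-step update `ξ = √t`: the variational upper bound term, as a
function of `ξ` on `(0, ∞)`, attains its global minimum at `ξ = √t`. -/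
theorem xi_update_optimal (t : ℝ) (ht : 0 < t) :
    (∀ ξ : ℝ, 0 < ξ →
      -ξ / 2 + lam ξ * (t - ξ ^ 2) + Real.log (1 + Real.exp ξ) ≥
        -Real.sqrt t / 2 + Real.log (1 + Real.exp (Real.sqrt t))) ∧
    -Real.sqrt t / 2 + lam (Real.sqrt t) * (t - Real.sqrt t ^ 2)
        + Real.log (1 + Real.exp (Real.sqrt t)) =
      -Real.sqrt t / 2 + Real.log (1 + Real.exp (Real.sqrt t)) := by
  have hb : 0 < Real.sqrt t := Real.sqrt_pos.mpr ht
  have ht2 : Real.sqrt t ^ 2 = t := Real.sq_sqrt ht.le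
  constructor
  · intro ξ hξ
    have h := phi_le hξ hb
    rw [ht2] at h
    nlinarith [h]
  · rw [ht2]
    ring
end

section
/- Let c ≥ 1 be a natural number, let a ∈ ℝ^c, and let k be an index. Then softmax(a)_k = 1 / ( 2 − c + ∑_{i ≠ k} σ(a_k − a_i)^{-1} ), where the sum ranges over all coordinates i ≠ k; in particular the denominator 2 − c + ∑_{i ≠ k} σ(a_k − a_i)^{-1} equals 1 + ∑_{i ≠ k} exp(a_i − a_k) and is strictly positive. -/
/-- Daunizeau's identity: the softmax is an exact combination of sigmoids, and the
denominator equals `1 + ∑_{i ≠ k} exp(a_i - a_k)` and is strictly positive. -/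
theorem softmax_eq_inv_sigmoid_sum (c : ℕ) (hc : 1 ≤ c) (a : Fin c → ℝ) (k : Fin c) :
    Real.exp (a k) / (∑ i, Real.exp (a i)) =
      1 / (2 - (c : ℝ) + ∑ i ∈ Finset.univ.erase k, (sigmoid (a k - a i))⁻¹) ∧
    2 - (c : ℝ) + ∑ i ∈ Finset.univ.erase k, (sigmoid (a k - a i))⁻¹ =
      1 + ∑ i ∈ Finset.univ.erase k, Real.exp (a i - a k) ∧
    0 < 2 - (c : ℝ) + ∑ i ∈ Finset.univ.erase k, (sigmoid (a k - a i))⁻¹ := by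
  have hsig : ∀ i : Fin c, (sigmoid (a k - a i))⁻¹ = 1 + Real.exp (a i - a k) := by
    intro i
    have h : (0:ℝ) < 1 + Real.exp (-(a k - a i)) := by positivity
    simp [sigmoid, neg_sub]
  have hden : 2 - (c : ℝ) + ∑ i ∈ Finset.univ.erase k, (sigmoid (a k - a i))⁻¹ =
      1 + ∑ i ∈ Finset.univ.erase k, Real.exp (a i - a k) := by
    simp only [hsig, Finset.sum_add_distrib, Finset.sum_const, nsmul_eq_mul,
      Finset.card_erase_of_mem (Finset.mem_univ k), Finset.card_univ, Fintype.card_fin]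
    have : ((c - 1 : ℕ) : ℝ) = (c : ℝ) - 1 := by
      have := Nat.cast_sub hc (R := ℝ)
      simpa using this
    rw [this]; ring
  have hpos : (0:ℝ) < 1 + ∑ i ∈ Finset.univ.erase k, Real.exp (a i - a k) := by
    have : (0:ℝ) ≤ ∑ i ∈ Finset.univ.erase k, Real.exp (a i - a k) :=
      Finset.sum_nonneg fun i _ => (Real.exp_pos _).le
    linarith
  refine ⟨?_, hden, hden ▸ hpos⟩
  rw [hden]
  have hsum : ∑ i, Real.exp (a i) = Real.exp (a k) * (1 + ∑ i ∈ Finset.univ.erase k, Real.exp (a i - a k)) := by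
    rw [← Finset.add_sum_erase _ _ (Finset.mem_univ k)]
    rw [mul_add, mul_one, Finset.mul_sum]
    congr 1
    apply Finset.sum_congr rfl
    intro i _
    rw [← Real.exp_add]; ring_nf
  rw [hsum, div_mul_eq_div_div, div_self (Real.exp_ne_zero _)]
end
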